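/- Let X be a complex Banach space and L(X) the Banach algebra of bounded linear operators on X. If P, Q ∈ L(X) have Hirano inverses and PQP = 0 and PQ² = 0, then P + Q has a Hirano inverse. -/

import Mathlib

/-- `a` has a Hirano inverse: there exists `z` with `az = za`, `z = zaz`,
and `a^2 - az` nilpotent. -/
def HasHiranoInverse {R : Type*} [Ring R] (a : R) : Prop :=
  ∃ z : R, a * z = z * a ∧ z = z * a * z ∧ IsNilpotent (a ^ 2 - a * z)

/-- `a` has a strongly Drazin inverse: there exists `z` with `az = za`, `z = zaz`,
and `a - az` nilpotent. -/
def HasStronglyDrazinInverse {R : Type*} [Ring R] (a : R) : Prop :=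
  ∃ z : R, a * z = z * a ∧ z = z * a * z ∧ IsNilpotent (a - a * z)

/-!
An element `a` of a ring has a Hirano inverse iff `a - a ^ 3` is nilpotent. Both directions
live in the commutative subring generated by `a` (and `z`); there, modulo the nilradical, `a ^ 2`
is idempotent, it lifts to an idempotent `e` with `a ^ 2 - e` nilpotent, and
`z = a e (1 + (a ^ 2 - e))⁻¹` is a Hirano inverse.

For the sum, put `α = a - a ^ 3`, `β = b - b ^ 3`, `γ = b (a + b) a`, `m = (a + b) a b`. Since
`a b (a + b) = 0`, one has `(a + b) - (a + b) ^ 3 = (β + (α - γ)) - m`, and the three partial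
sums are nilpotent because `x + y` is nilpotent whenever `x`, `y` are and `y x (x + y) = 0`:
then `y (x + y) ^ (k + 1) = y ^ (k + 1) (x + y)`, so eventually `(x + y) ^ (N + 1) = x (x + y) ^ N`.
-/

theorem HasHiranoInverse.map {R S F : Type*} [Ring R] [Ring S] [FunLike F R S]
    [RingHomClass F R S] (f : F) {a : R} (h : HasHiranoInverse a) : HasHiranoInverse (f a) := by
  obtain ⟨z, hcomm, hz, hnil⟩ := h
  refine ⟨f z, by rw [← map_mul, hcomm, map_mul], by rw [← map_mul, ← map_mul, ← hz], ?_⟩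
  simpa using hnil.map f

section CommRing

variable {R : Type*} [CommRing R] {a : R}

theorem HasHiranoInverse.isNilpotent_sub_pow_three_of_comm (h : HasHiranoInverse a) :
    IsNilpotent (a - a ^ 3) := by
  obtain ⟨z, -, hz, hnil⟩ := h
  have hsq : (a * (1 - a * z)) ^ 2 = (a ^ 2 - a * z) * (1 - a * z) := by
    linear_combination (a * (1 - a ^ 2)) * hz
  have h₁ : IsNilpotent (a * (1 - a * z)) :=
    (IsNilpotent.pow_iff_pos two_ne_zero).mp (hsq ▸ (Commute.all _ _).isNilpotent_mul_right hnil)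
  have h₂ : IsNilpotent (a * (a ^ 2 - a * z)) := (Commute.all _ _).isNilpotent_mul_left hnil
  rw [show a - a ^ 3 = a * (1 - a * z) - a * (a ^ 2 - a * z) by ring]
  exact (Commute.all _ _).isNilpotent_sub h₁ h₂

theorem exists_isIdempotentElem_isNilpotent_sub (h : IsNilpotent (a - a ^ 3)) :
    ∃ e : R, IsIdempotentElem e ∧ IsNilpotent (a ^ 2 - e) := by
  let f := Ideal.Quotient.mk (nilradical R)
  have hker : ∀ x ∈ RingHom.ker f, IsNilpotent x := fun x hx => by
    rwa [Ideal.mk_ker, mem_nilradical] at hx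
  have hidem : IsIdempotentElem (f (a ^ 2)) := by
    rw [IsIdempotentElem, ← map_mul, ← sub_eq_zero, ← map_sub, ← RingHom.mem_ker, Ideal.mk_ker,
      mem_nilradical, show a ^ 2 * a ^ 2 - a ^ 2 = -(a * (a - a ^ 3)) by ring]
    exact ((Commute.all _ _).isNilpotent_mul_left h).neg
  obtain ⟨e, he, hfe⟩ := exists_isIdempotentElem_eq_of_ker_isNilpotent f hker _ ⟨_, rfl⟩ hidem
  refine ⟨e, he, hker _ ?_⟩
  rw [RingHom.mem_ker, map_sub, hfe, sub_self]

theorem hasHiranoInverse_of_isNilpotent_sub_pow_three_of_comm (h : IsNilpotent (a - a ^ 3)) :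
    HasHiranoInverse a := by
  obtain ⟨e, he, hnil⟩ := exists_isIdempotentElem_isNilpotent_sub h
  obtain ⟨u, hu⟩ := hnil.isUnit_one_add
  set w : R := ↑u⁻¹
  have hae : a * (a * e * w) = e := by
    calc a * (a * e * w) = e * ((1 + (a ^ 2 - e)) * w) := by linear_combination w * he.eq
      _ = e := by rw [← hu, Units.mul_inv, mul_one]
  refine ⟨a * e * w, by ring, ?_, by rwa [hae]⟩
  calc a * e * w = e * (a * e * w) := by linear_combination (-(a * w)) * he.eq
    _ = a * (a * e * w) * (a * e * w) := by rw [hae]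
    _ = a * e * w * a * (a * e * w) := by ring

end CommRing

section Ring

open scoped IsMulCommutative

variable {R : Type*} [Ring R] {a : R}

theorem HasHiranoInverse.isNilpotent_sub_pow_three (h : HasHiranoInverse a) :
    IsNilpotent (a - a ^ 3) := by
  obtain ⟨z, hcomm, hz, hnil⟩ := h
  let S := Subring.closure ({a, z} : Set R)
  have : IsMulCommutative S := Subring.isMulCommutative_closure <| by
    rintro x (rfl | rfl) y (rfl | rfl) <;> first | rfl | exact hcomm | exact hcomm.symm
  let a' : S := ⟨a, Subring.subset_closure (by simp)⟩
  let z' : S := ⟨z, Subring.subset_closure (by simp)⟩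
  have ha' : HasHiranoInverse a' :=
    ⟨z', Subtype.ext hcomm, Subtype.ext hz, (IsNilpotent.map_iff S.subtype_injective).mp hnil⟩
  simpa using ha'.isNilpotent_sub_pow_three_of_comm.map S.subtype

theorem hasHiranoInverse_of_isNilpotent_sub_pow_three (h : IsNilpotent (a - a ^ 3)) :
    HasHiranoInverse a := by
  let S := Subring.closure ({a} : Set R)
  have : IsMulCommutative S := Subring.isMulCommutative_closure <| by rintro x rfl y rfl; rfl
  let a' : S := ⟨a, Subring.subset_closure rfl⟩
  have ha' : IsNilpotent (a' - a' ^ 3) := (IsNilpotent.map_iff S.subtype_injective).mp h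
  exact (hasHiranoInverse_of_isNilpotent_sub_pow_three_of_comm ha').map S.subtype

theorem hasHiranoInverse_iff_isNilpotent_sub_pow_three :
    HasHiranoInverse a ↔ IsNilpotent (a - a ^ 3) :=
  ⟨HasHiranoInverse.isNilpotent_sub_pow_three, hasHiranoInverse_of_isNilpotent_sub_pow_three⟩

end Ring

section NilpotentSum

variable {R : Type*} [Ring R] {x y : R}

theorem mul_add_pow_succ_of_mul_mul_add_eq_zero (h : y * x * (x + y) = 0) (k : ℕ) :
    y * (x + y) ^ (k + 1) = y ^ (k + 1) * (x + y) := by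
  induction k with
  | zero => simp
  | succ k ih =>
    calc y * (x + y) ^ (k + 2) = y ^ (k + 1) * (x + y) * (x + y) := by
          rw [pow_succ _ (k + 1), ← mul_assoc, ih]
      _ = y ^ k * (y * x * (x + y)) + y ^ (k + 2) * (x + y) := by
          rw [pow_succ y (k + 1), pow_succ y k]; noncomm_ring
      _ = y ^ (k + 2) * (x + y) := by rw [h, mul_zero, zero_add]

theorem isNilpotent_add_of_mul_mul_add_eq_zero (hx : IsNilpotent x) (hy : IsNilpotent y)
    (h : y * x * (x + y) = 0) : IsNilpotent (x + y) := by
  obtain ⟨m, hm⟩ := hx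
  obtain ⟨n, hn⟩ := hy
  have hy_mul : ∀ k, y * (x + y) ^ (n + 1 + k) = 0 := fun k => by
    rw [pow_add, ← mul_assoc, mul_add_pow_succ_of_mul_mul_add_eq_zero h, pow_succ, hn,
      zero_mul, zero_mul, zero_mul]
  have hpow : ∀ k, (x + y) ^ (n + 1 + k) = x ^ k * (x + y) ^ (n + 1) := fun k => by
    induction k with
    | zero => simp
    | succ k ih =>
      rw [← add_assoc, pow_succ', add_mul, hy_mul, add_zero, ih, ← mul_assoc, ← pow_succ']
  exact ⟨n + 1 + m, by rw [hpow, hm, zero_mul]⟩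

end NilpotentSum

theorem isNilpotent_add_sub_add_pow_three {R : Type*} [Ring R] {a b : R}
    (ha : IsNilpotent (a - a ^ 3)) (hb : IsNilpotent (b - b ^ 3))
    (h1 : a * b * a = 0) (h2 : a * b ^ 2 = 0) :
    IsNilpotent (a + b - (a + b) ^ 3) := by
  have hab : a * b * (a + b) = 0 := by rw [mul_add, h1, zero_add, ← h2, sq, mul_assoc]
  set γ := b * (a + b) * a
  set m := (a + b) * a * b
  set W := b - b ^ 3 + (a - a ^ 3 - γ)
  have hγ : IsNilpotent γ := ⟨2, by rw [show γ ^ 2 = b * (a + b) * (a * b * (a + b)) * a by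
    simp only [γ, pow_two, mul_assoc], hab, mul_zero, zero_mul]⟩
  have hm : IsNilpotent m := ⟨2, by rw [show m ^ 2 = (a + b) * (a * b * (a + b)) * a * b by
    simp only [m, pow_two, mul_assoc], hab, mul_zero, zero_mul, zero_mul]⟩
  have hαγ : IsNilpotent (a - a ^ 3 - γ) := by
    refine sub_eq_neg_add (a - a ^ 3) γ ▸ isNilpotent_add_of_mul_mul_add_eq_zero hγ.neg ha ?_
    rw [show (a - a ^ 3) * -γ = -((1 - a ^ 2) * (a * b * (a + b)) * a) by
      simp only [γ]; noncomm_ring, hab, mul_zero, zero_mul, neg_zero, zero_mul]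
  have habW : a * b * W = 0 := by
    rw [show a * b * W = a * b * a * (1 - a ^ 2) + a * b ^ 2 * (1 - b ^ 2 - (a + b) * a) by
      simp only [W, γ]; noncomm_ring, h1, h2, zero_mul, zero_mul, add_zero]
  have hW : IsNilpotent W := by
    refine isNilpotent_add_of_mul_mul_add_eq_zero hb hαγ ?_
    set c := 1 - a ^ 2 - b * (a + b)
    rw [show (a - a ^ 3 - γ) * (b - b ^ 3) * W = c * (a * b * W) - c * (a * b ^ 2) * (b * W) by
      simp only [c, γ]; noncomm_ring, habW, h2, mul_zero, zero_mul, sub_zero]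
  have hWm : IsNilpotent (W + -m) := by
    refine isNilpotent_add_of_mul_mul_add_eq_zero hW hm.neg ?_
    rw [show -m * W = -((a + b) * (a * b * W)) by simp only [m, mul_assoc, neg_mul], habW,
      mul_zero, neg_zero, zero_mul]
  rwa [show a + b - (a + b) ^ 3 = W + -m - a * b * (a + b) by simp only [W, γ, m]; noncomm_ring,
    hab, sub_zero]

theorem HasHiranoInverse.add {R : Type*} [Ring R] {a b : R} (ha : HasHiranoInverse a)
    (hb : HasHiranoInverse b) (h1 : a * b * a = 0) (h2 : a * b ^ 2 = 0) :
    HasHiranoInverse (a + b) :=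
  hasHiranoInverse_iff_isNilpotent_sub_pow_three.mpr <|
    isNilpotent_add_sub_add_pow_three ha.isNilpotent_sub_pow_three hb.isNilpotent_sub_pow_three
      h1 h2

variable {X : Type*} [NormedAddCommGroup X] [NormedSpace ℂ X] [CompleteSpace X]

theorem hirano_add (P Q : X →L[ℂ] X)
    (hP : HasHiranoInverse P) (hQ : HasHiranoInverse Q)
    (h1 : P * Q * P = 0) (h2 : P * Q ^ 2 = 0) :
    HasHiranoInverse (P + Q) := by
  exact HasHiranoInverse.add hP hQ h1 h2
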